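/- Let 0 ≤ α ≤ 2, let g : ℝ → ℝ be convex and C², and let θ ∈ S(ℝ²). Then the pointwise inequality Λ^α(g(θ))(x) ≤ g'(θ(x)) · Λ^α θ(x) holds for all x ∈ ℝ². In particular, for 0 < α < 2 and g(t) = t², one has Λ^α(θ²)(x) ≤ 2θ(x) Λ^α θ(x). -/

import Mathlib

/-!
For convex `g` the tangent line at `θ x` lies below `g`, so the second difference
`g(θ(x+y)) + g(θ(x-y)) - 2 g(θ x)` exceeds `g'(θ x)` times the second difference of `θ` by a
sum of two Bregman divergences of `g`, which are nonnegative. Integrating against the positive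
kernel `‖y‖^{-(2+α)}` gives the inequality. The real work is integrability: both second
differences are bounded, and they are `O(‖y‖²)` since `θ` and `Dθ` are Lipschitz and `g'` is
Lipschitz on the bounded range of `θ`; on `ℝ^d` such a function divided by `‖y‖^p` is
integrable for `d < p < d + 2`.
-/

open MeasureTheory Real Set
open scoped ENNReal FourierTransform

noncomputable section

abbrev E2 := EuclideanSpace ℝ (Fin 2)

/-- The fractional Laplacian `Λ^α`, `0 < α < 2`, in its absolutely convergent
second-difference form (with normalizing constant `Cα > 0`). -/
def fracLap (α Cα : ℝ) (f : E2 → ℝ) (x : E2) : ℝ :=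
  -(Cα / 2) * ∫ y : E2, (f (x + y) + f (x - y) - 2 * f x) / ‖y‖ ^ (2 + α)

open Module Metric
open scoped NNReal SchwartzMap

section Kernel

variable {E : Type*} [NormedAddCommGroup E] [NormedSpace ℝ E] [FiniteDimensional ℝ E]
  [MeasurableSpace E] [BorelSpace E] {μ : Measure E} [μ.IsAddHaarMeasure]
  {f : E → ℝ} {p : ℝ}

theorem integrableOn_ball_div_norm_rpow {B : ℝ} (hd : 1 ≤ finrank ℝ E)
    (hp : p < finrank ℝ E + 2) (hf : AEStronglyMeasurable f μ)
    (hB : ∀ y, |f y| ≤ B * ‖y‖ ^ 2) :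
    IntegrableOn (fun y => f y / ‖y‖ ^ p) (ball 0 1) μ := by
  have : Nontrivial E := Module.nontrivial_of_finrank_pos (R := ℝ) (by omega)
  refine integrableOn_ball_of_norm_le_rpow (C := B) (α := p - 2) hd (by linarith) ?_
    (hf.div₀ (measurable_norm.pow_const p).aestronglyMeasurable)
  have h0 : ∀ᵐ y ∂μ, y ∉ ({0} : Set E) :=
    measure_eq_zero_iff_ae_notMem.1 (measure_singleton 0)
  filter_upwards [ae_restrict_of_ae h0] with y hy
  have hy : 0 < ‖y‖ := norm_pos_iff.2 hy
  rw [Real.norm_eq_abs, abs_div, abs_of_nonneg (rpow_nonneg hy.le _),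
    div_le_iff₀ (rpow_pos_of_pos hy _), mul_assoc, ← rpow_add hy,
    show -(p - 2) + p = (2 : ℕ) by push_cast; ring, rpow_natCast]
  exact hB y

theorem integrableOn_compl_ball_div_norm_rpow {A : ℝ} (hp : (finrank ℝ E : ℝ) < p)
    (hf : AEStronglyMeasurable f μ) (hA : ∀ y, |f y| ≤ A) :
    IntegrableOn (fun y => f y / ‖y‖ ^ p) (ball 0 1)ᶜ μ := by
  have hp0 : 0 < p := lt_of_le_of_lt (Nat.cast_nonneg _) hp
  have hA0 : 0 ≤ A := (abs_nonneg _).trans (hA 0)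
  refine Integrable.mono' (((integrable_one_add_norm hp).const_mul (2 ^ p * A)).integrableOn)
    (hf.div₀ (measurable_norm.pow_const p).aestronglyMeasurable).restrict ?_
  filter_upwards [self_mem_ae_restrict measurableSet_ball.compl] with y hy
  have hy : 1 ≤ ‖y‖ := by simpa using hy
  have hy0 : 0 < ‖y‖ := by linarith
  rw [Real.norm_eq_abs, abs_div, abs_of_nonneg (rpow_nonneg hy0.le _), rpow_neg (by positivity),
    div_le_iff₀ (rpow_pos_of_pos hy0 _)]
  calc |f y| ≤ A := hA y
    _ = A * (1 + ‖y‖) ^ p * ((1 + ‖y‖) ^ p)⁻¹ := by field_simp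
    _ ≤ A * (2 * ‖y‖) ^ p * ((1 + ‖y‖) ^ p)⁻¹ := by gcongr; linarith
    _ = 2 ^ p * A * ((1 + ‖y‖) ^ p)⁻¹ * ‖y‖ ^ p := by
      rw [mul_rpow zero_le_two hy0.le]; ring

theorem integrable_div_norm_rpow_of_abs_le {A B : ℝ} (hd : 1 ≤ finrank ℝ E)
    (hp : (finrank ℝ E : ℝ) < p) (hp2 : p < finrank ℝ E + 2) (hf : AEStronglyMeasurable f μ)
    (hA : ∀ y, |f y| ≤ A) (hB : ∀ y, |f y| ≤ B * ‖y‖ ^ 2) :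
    Integrable (fun y => f y / ‖y‖ ^ p) μ := by
  rw [← integrableOn_univ, ← union_compl_self (ball (0 : E) 1)]
  exact (integrableOn_ball_div_norm_rpow hd hp2 hf hB).union
    (integrableOn_compl_ball_div_norm_rpow hp hf hA)

end Kernel

def secondDiff {G : Type*} [AddGroup G] (f : G → ℝ) (x y : G) : ℝ :=
  f (x + y) + f (x - y) - 2 * f x

theorem abs_secondDiff_le_of_abs_le {G : Type*} [AddGroup G] {f : G → ℝ} {M : ℝ}
    (hM : ∀ z, |f z| ≤ M) (x y : G) : |secondDiff f x y| ≤ 4 * M := by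
  have h_add := abs_le.1 (hM (x + y))
  have h_sub := abs_le.1 (hM (x - y))
  have h_self := abs_le.1 (hM x)
  rw [secondDiff, abs_le]
  constructor <;> linarith

section SecondDifference

variable {E : Type*} [NormedAddCommGroup E] [NormedSpace ℝ E]

theorem norm_sub_sub_fderiv_le_of_lipschitzWith {F : Type*} [NormedAddCommGroup F]
    [NormedSpace ℝ F] {f : E → F} {L : ℝ≥0} (hf : Differentiable ℝ f)
    (hL : LipschitzWith L (fderiv ℝ f)) (x w : E) :
    ‖f (x + w) - f x - fderiv ℝ f x w‖ ≤ L * ‖w‖ ^ 2 := by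
  have h := (convex_closedBall x ‖w‖).norm_image_sub_le_of_norm_fderiv_le'
    (φ := fderiv ℝ f x) (C := L * ‖w‖) (fun z _ => hf z)
    (fun z hz => ?_) (mem_closedBall_self (norm_nonneg w)) (y := x + w) (by simp)
  · simpa [sq, mul_assoc] using h
  · calc ‖fderiv ℝ f z - fderiv ℝ f x‖ ≤ L * ‖z - x‖ := hL.norm_sub_le z x
      _ ≤ L * ‖w‖ := by gcongr; simpa [dist_eq_norm] using hz

theorem abs_secondDiff_le_of_lipschitzWith_fderiv {f : E → ℝ} {L : ℝ≥0}
    (hf : Differentiable ℝ f) (hL : LipschitzWith L (fderiv ℝ f)) (x y : E) :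
    |secondDiff f x y| ≤ 2 * L * ‖y‖ ^ 2 := by
  have h_add := norm_sub_sub_fderiv_le_of_lipschitzWith hf hL x y
  have h_sub := norm_sub_sub_fderiv_le_of_lipschitzWith hf hL x (-y)
  rw [map_neg, norm_neg, ← sub_eq_add_neg, Real.norm_eq_abs] at h_sub
  rw [Real.norm_eq_abs] at h_add
  calc |secondDiff f x y|
      = |(f (x + y) - f x - fderiv ℝ f x y) + (f (x - y) - f x - -fderiv ℝ f x y)| := by
        rw [secondDiff]; ring_nf
    _ ≤ _ := abs_add_le _ _
    _ ≤ 2 * L * ‖y‖ ^ 2 := by linarith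

end SecondDifference

namespace SchwartzMap

variable {E F : Type*} [NormedAddCommGroup E] [NormedSpace ℝ E] [NormedAddCommGroup F]
  [NormedSpace ℝ F]

theorem exists_lipschitzWith (f : 𝓢(E, F)) : ∃ K, LipschitzWith K f :=
  ⟨_, lipschitzWith_of_nnnorm_fderiv_le f.differentiable fun x =>
    NNReal.le_toNNReal_of_coe_le <| by
      simpa [fderivCLM_apply] using norm_le_seminorm ℝ (fderivCLM ℝ E F f) x⟩

theorem exists_lipschitzWith_fderiv (f : 𝓢(E, F)) : ∃ K, LipschitzWith K (fderiv ℝ f) := by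
  rw [← funext (fderivCLM_apply ℝ f)]
  exact (fderivCLM ℝ E F f).exists_lipschitzWith

end SchwartzMap

def bregmanDiv (g : ℝ → ℝ) (a c : ℝ) : ℝ :=
  g a - g c - deriv g c * (a - c)

namespace ConvexOn

variable {S : Set ℝ} {g : ℝ → ℝ} {a c : ℝ}

theorem bregmanDiv_nonneg (hg : ConvexOn ℝ S g) (ha : a ∈ S) (hc : c ∈ S)
    (hd : DifferentiableAt ℝ g c) : 0 ≤ bregmanDiv g a c := by
  rw [bregmanDiv, sub_nonneg]
  rcases lt_trichotomy c a with h | rfl | h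
  · have := hg.deriv_le_slope hc ha h hd
    rwa [slope_def_field, le_div_iff₀ (sub_pos.2 h)] at this
  · simp
  · have := hg.slope_le_deriv ha hc h hd
    rw [slope_def_field, div_le_iff₀ (sub_pos.2 h)] at this
    linarith

theorem bregmanDiv_le (hg : ConvexOn ℝ S g) {K : ℝ≥0} (hK : LipschitzOnWith K (deriv g) S)
    (ha : a ∈ S) (hc : c ∈ S) (hd : DifferentiableAt ℝ g a) :
    bregmanDiv g a c ≤ K * (a - c) ^ 2 := by
  have h_tangent := hg.bregmanDiv_nonneg hc ha hd
  have h_lip : |deriv g a - deriv g c| ≤ K * |a - c| := by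
    simpa [Real.dist_eq] using hK.dist_le_mul a ha c hc
  rw [bregmanDiv] at h_tangent ⊢
  calc g a - g c - deriv g c * (a - c) ≤ (deriv g a - deriv g c) * (a - c) := by linarith
    _ ≤ |deriv g a - deriv g c| * |a - c| := by rw [← abs_mul]; exact le_abs_self _
    _ ≤ K * |a - c| * |a - c| := by gcongr
    _ = K * (a - c) ^ 2 := by rw [mul_assoc, abs_mul_abs_self, sq]

end ConvexOn

theorem secondDiff_comp_sub_deriv_mul {G : Type*} [AddGroup G] (g : ℝ → ℝ) (θ : G → ℝ)
    (x y : G) :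
    secondDiff (fun z => g (θ z)) x y - deriv g (θ x) * secondDiff θ x y =
      bregmanDiv g (θ (x + y)) (θ x) + bregmanDiv g (θ (x - y)) (θ x) := by
  simp only [secondDiff, bregmanDiv]
  ring

theorem ConvexOn.deriv_mul_secondDiff_le {G : Type*} [AddGroup G] {S : Set ℝ} {g : ℝ → ℝ}
    (hg : ConvexOn ℝ S g) (hd : Differentiable ℝ g) {θ : G → ℝ} (hθ : ∀ z, θ z ∈ S)
    (x y : G) : deriv g (θ x) * secondDiff θ x y ≤ secondDiff (fun z => g (θ z)) x y := by
  have h := secondDiff_comp_sub_deriv_mul g θ x y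
  have h_add := hg.bregmanDiv_nonneg (hθ (x + y)) (hθ x) (hd _)
  have h_sub := hg.bregmanDiv_nonneg (hθ (x - y)) (hθ x) (hd _)
  linarith

theorem abs_secondDiff_comp_sub_deriv_mul_le {G : Type*} [AddGroup G] {S : Set ℝ}
    {g : ℝ → ℝ} (hg : ConvexOn ℝ S g) (hd : Differentiable ℝ g) {K : ℝ≥0}
    (hK : LipschitzOnWith K (deriv g) S) {θ : G → ℝ} (hθ : ∀ z, θ z ∈ S) (x y : G) :
    |secondDiff (fun z => g (θ z)) x y - deriv g (θ x) * secondDiff θ x y| ≤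
      K * ((θ (x + y) - θ x) ^ 2 + (θ (x - y) - θ x) ^ 2) := by
  have h_add := hg.bregmanDiv_nonneg (hθ (x + y)) (hθ x) (hd _)
  have h_sub := hg.bregmanDiv_nonneg (hθ (x - y)) (hθ x) (hd _)
  have h_add' := hg.bregmanDiv_le hK (hθ (x + y)) (hθ x) (hd _)
  have h_sub' := hg.bregmanDiv_le hK (hθ (x - y)) (hθ x) (hd _)
  rw [secondDiff_comp_sub_deriv_mul, abs_of_nonneg (by positivity)]
  linarith

section Integrability

variable {E : Type*} [NormedAddCommGroup E] [NormedSpace ℝ E] [FiniteDimensional ℝ E]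
  [MeasurableSpace E] [BorelSpace E] {μ : Measure E} [μ.IsAddHaarMeasure] {p : ℝ}

theorem SchwartzMap.integrable_secondDiff_div_norm_rpow (θ : 𝓢(E, ℝ)) (x : E)
    (hd : 1 ≤ finrank ℝ E) (hp : (finrank ℝ E : ℝ) < p) (hp2 : p < finrank ℝ E + 2) :
    Integrable (fun y => secondDiff θ x y / ‖y‖ ^ p) μ := by
  obtain ⟨L, hL⟩ := θ.exists_lipschitzWith_fderiv
  refine integrable_div_norm_rpow_of_abs_le hd hp hp2 ?_
    (abs_secondDiff_le_of_abs_le (norm_le_seminorm ℝ θ) x)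
    (abs_secondDiff_le_of_lipschitzWith_fderiv θ.differentiable hL x)
  unfold secondDiff
  fun_prop

theorem integrable_secondDiff_comp_div_norm_rpow {g : ℝ → ℝ} (hg : ConvexOn ℝ univ g)
    (hg2 : ContDiff ℝ 2 g) (θ : 𝓢(E, ℝ)) (x : E)
    (hd : 1 ≤ finrank ℝ E) (hp : (finrank ℝ E : ℝ) < p) (hp2 : p < finrank ℝ E + 2) :
    Integrable (fun y => secondDiff (fun z => g (θ z)) x y / ‖y‖ ^ p) μ := by
  set M := SchwartzMap.seminorm ℝ 0 0 θ
  have hM : ∀ z, θ z ∈ Icc (-M) M := fun z => abs_le.1 (SchwartzMap.norm_le_seminorm ℝ θ z)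
  obtain ⟨L, hL⟩ := θ.exists_lipschitzWith
  obtain ⟨K, hK⟩ : ∃ K, LipschitzOnWith K (deriv g) (Icc (-M) M) :=
    (contDiff_succ_iff_deriv.1 hg2).2.2.locallyLipschitz.locallyLipschitzOn
      |>.exists_lipschitzOnWith_of_compact isCompact_Icc
  have hsq_bdd : ∀ w, (θ w - θ x) ^ 2 ≤ (2 * M) ^ 2 := fun w => by
    obtain ⟨hw₁, hw₂⟩ := hM w
    obtain ⟨hx₁, hx₂⟩ := hM x
    exact sq_le_sq' (by linarith) (by linarith)
  have hsq_lip : ∀ w, (θ w - θ x) ^ 2 ≤ L ^ 2 * ‖w - x‖ ^ 2 := fun w => by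
    rw [← mul_pow, ← sq_abs]
    exact pow_le_pow_left₀ (abs_nonneg _) (hL.norm_sub_le w x) 2
  have h_gap := abs_secondDiff_comp_sub_deriv_mul_le (hg.subset (subset_univ _) (convex_Icc _ _))
    (hg2.differentiable two_ne_zero) hK hM x
  have h_int : Integrable (fun y => (secondDiff (fun z => g (θ z)) x y -
      deriv g (θ x) * secondDiff θ x y) / ‖y‖ ^ p) μ := by
    refine integrable_div_norm_rpow_of_abs_le (A := K * (2 * (2 * M) ^ 2))
      (B := K * (2 * L ^ 2)) hd hp hp2 ?_ (fun y => (h_gap y).trans ?_)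
      (fun y => (h_gap y).trans ?_)
    · unfold secondDiff
      fun_prop
    · gcongr
      linarith [hsq_bdd (x + y), hsq_bdd (x - y)]
    · have h_add := hsq_lip (x + y)
      have h_sub := hsq_lip (x - y)
      simp only [add_sub_cancel_left, sub_sub_cancel_left, norm_neg] at h_add h_sub
      rw [mul_assoc]
      gcongr
      linarith
  refine (h_int.add ((θ.integrable_secondDiff_div_norm_rpow x hd hp hp2).const_mul
    (deriv g (θ x)))).congr (Filter.Eventually.of_forall fun y => ?_)
  simp only [Pi.add_apply]
  ring

end Integrability

theorem fracLap_le_mul_fracLap {α Cα : ℝ} (hCα : 0 ≤ Cα) {f₁ f₂ : E2 → ℝ} {c : ℝ}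
    {x : E2}
    (h₁ : Integrable fun y => secondDiff f₁ x y / ‖y‖ ^ (2 + α))
    (h₂ : Integrable fun y => secondDiff f₂ x y / ‖y‖ ^ (2 + α))
    (h : ∀ y, c * secondDiff f₂ x y ≤ secondDiff f₁ x y) :
    fracLap α Cα f₁ x ≤ c * fracLap α Cα f₂ x := by
  have h_int : c * ∫ y, secondDiff f₂ x y / ‖y‖ ^ (2 + α) ≤
      ∫ y, secondDiff f₁ x y / ‖y‖ ^ (2 + α) := by
    rw [← integral_const_mul]
    refine integral_mono (h₂.const_mul c) h₁ fun y => ?_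
    rw [← mul_div_assoc]
    exact div_le_div_of_nonneg_right (h y) (rpow_nonneg (norm_nonneg y) _)
  change -(Cα / 2) * ∫ y, secondDiff f₁ x y / ‖y‖ ^ (2 + α) ≤
    c * (-(Cα / 2) * ∫ y, secondDiff f₂ x y / ‖y‖ ^ (2 + α))
  rw [mul_left_comm]
  exact mul_le_mul_of_nonpos_left h_int (by linarith)

/-- Córdoba–Córdoba pointwise inequality `Λ^α(g(θ)) ≤ g'(θ) Λ^α θ` for convex `C²`
functions `g` and Schwartz `θ`; in particular `Λ^α(θ²) ≤ 2θ Λ^α θ`. -/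
theorem stmt12 (α Cα : ℝ) (hα : 0 < α) (hα2 : α < 2) (hCα : 0 < Cα)
    (g : ℝ → ℝ) (hgc : ConvexOn ℝ Set.univ g) (hg : ContDiff ℝ 2 g)
    (θ : SchwartzMap E2 ℝ) :
    (∀ x : E2, fracLap α Cα (fun z => g (θ z)) x ≤ deriv g (θ x) * fracLap α Cα (fun z => θ z) x) ∧
    (∀ x : E2, fracLap α Cα (fun z => θ z ^ 2) x ≤ 2 * θ x * fracLap α Cα (fun z => θ z) x) := by
  have hE : finrank ℝ E2 = 2 := finrank_euclideanSpace_fin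
  have hd : 1 ≤ finrank ℝ E2 := by omega
  have hp : (finrank ℝ E2 : ℝ) < 2 + α := by rw [hE]; push_cast; linarith
  have hp2 : 2 + α < finrank ℝ E2 + 2 := by rw [hE]; push_cast; linarith
  have key : ∀ g : ℝ → ℝ, ConvexOn ℝ univ g → ContDiff ℝ 2 g → ∀ x,
      fracLap α Cα (fun z => g (θ z)) x ≤ deriv g (θ x) * fracLap α Cα (fun z => θ z) x :=
    fun g hgc hg x => fracLap_le_mul_fracLap hCα.le
      (integrable_secondDiff_comp_div_norm_rpow hgc hg θ x hd hp hp2)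
      (θ.integrable_secondDiff_div_norm_rpow x hd hp hp2)
      (hgc.deriv_mul_secondDiff_le (hg.differentiable two_ne_zero) (fun _ => mem_univ _) x)
  refine ⟨key g hgc hg, fun x => ?_⟩
  simpa using key (· ^ 2) (even_two.convexOn_pow) (contDiff_id.pow 2) x
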